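/- Off-diagonal coefficient identity for the coupled σ-model action (Equation (3.29)). For all r ≠ s in {1, …, N} and for each choice of sign ±, the quantity c^±_{rs} := ±(ℓ^∞/8) φ^r_±(z_r) φ^s_±(z_s) Σ_{i∈I_±} φ_∓(ζ_i) / (φ_±'(ζ_i) (z_r−ζ_i)(z_s−ζ_i)) satisfies c^±_{rs} = (ρ_rs + ρ_sr)/4. Equivalently, ±(ℓ^∞/8) (φ^r_±(z_r) φ^s_∓(z_s) − φ^r_∓(z_r) φ^s_±(z_s))/(z_r − z_s) = (ρ_rs + ρ_sr)/4. -/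

import Mathlib

open scoped BigOperators

/-- One of the two "halves" `φ_±(w) = ∏_{i ∈ I} (w - ζ_i) / ∏_r (w - z_r)` of the twist
function. -/
noncomputable def phiHalf {ι κ : Type*} [Fintype ι] [Fintype κ]
    (z : ι → ℂ) (ζ : κ → ℂ) (I : Finset κ) (w : ℂ) : ℂ :=
  (∏ i ∈ I, (w - ζ i)) / ∏ r, (w - z r)

/-- The function `φ^r_±(w) = (w - z_r) φ_±(w) = ∏_{i ∈ I} (w - ζ_i) / ∏_{s ≠ r} (w - z_s)`. -/
noncomputable def phiHalfR {ι κ : Type*} [Fintype ι] [DecidableEq ι] [Fintype κ]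
    (z : ι → ℂ) (ζ : κ → ℂ) (I : Finset κ) (r : ι) (w : ℂ) : ℂ :=
  (∏ i ∈ I, (w - ζ i)) / ∏ s ∈ Finset.univ.erase r, (w - z s)

/-- The coefficients `ρ_{rs}` of the coupled σ-model action (Equation (3.19)). -/
noncomputable def rhoCoef {ι κ : Type*} [Fintype ι] [DecidableEq ι] [Fintype κ]
    (linf : ℂ) (z : ι → ℂ) (ζ : κ → ℂ) (Ip Im : Finset κ) (r s : ι) : ℂ :=
  if r = s then
    linf / 4 * (deriv (phiHalfR z ζ Ip r) (z r) * phiHalfR z ζ Im r (z r)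
      - phiHalfR z ζ Ip r (z r) * deriv (phiHalfR z ζ Im r) (z r))
  else
    linf / 2 * phiHalfR z ζ Ip r (z r) * phiHalfR z ζ Im s (z s) / (z r - z s)

/-!
Write `P_±(w) = ∏_{i ∈ I_±} (w - ζ_i)`. The common denominator `∏_r (w - z_r)` cancels in
`φ_∓(ζ_i) / φ_±'(ζ_i) = P_∓(ζ_i) / P_±'(ζ_i)`, and `1 / P_±'(ζ_i)` is the Lagrange nodal
weight of `ζ_i`. Since `deg P_∓ = deg P_±`, the partial fraction decomposition of `P_∓ / P_±` has a
constant term plus simple poles with residues `P_∓(ζ_i) / P_±'(ζ_i)`. Splitting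
`1 / ((z_r - ζ_i)(z_s - ζ_i))` into simple fractions, the sum over `I_±` becomes the difference
of `P_∓ / P_±` at `z_s` and `z_r` divided by `z_r - z_s`, the constant term cancelling; this is
the second form of the identity, into which `(ρ_rs + ρ_sr) / 4` unfolds.
-/

open Polynomial Finset

namespace Lagrange

variable {F ι : Type*} [Field F] [DecidableEq ι] {s : Finset ι} {v : ι → F} {p : F[X]} {x : F}

theorem eval_div_eval_nodal_eq_coeff_add_sum (hvs : Set.InjOn v s) (hp : p.natDegree ≤ #s)
    (hx : ∀ i ∈ s, x ≠ v i) :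
    p.eval x / (nodal s v).eval x
      = p.coeff #s + ∑ i ∈ s, nodalWeight s v i * (x - v i)⁻¹ * p.eval (v i) := by
  set q := p - C (p.coeff #s) * nodal s v
  have hq : q.degree < #s := by
    refine degree_lt_iff_coeff_zero _ _ |>.mpr fun m hm => ?_
    rcases hm.eq_or_lt with rfl | hm
    · have h1 : (nodal s v).coeff #s = 1 := by
        simpa [natDegree_nodal] using (nodal_monic (s := s) (v := v)).coeff_natDegree
      simp [q, coeff_C_mul, h1]
    · have hpm : p.coeff m = 0 := coeff_eq_zero_of_natDegree_lt (by omega)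
      have hnm : (nodal s v).coeff m = 0 :=
        coeff_eq_zero_of_natDegree_lt (by rw [natDegree_nodal]; omega)
      simp [q, coeff_C_mul, hpm, hnm]
  have hqv : ∀ i ∈ s, q.eval (v i) = p.eval (v i) := fun i hi => by
    simp [q, eval_nodal_at_node hi]
  have hnodal : (nodal s v).eval x ≠ 0 := eval_nodal_not_at_node hx
  have key := congr_arg (eval x) (eq_interpolate_of_eval_eq _ hvs hq hqv)
  rw [eval_interpolate_not_at_node _ hx] at key
  simp only [q, eval_sub, eval_mul, eval_C] at key
  rw [div_eq_iff hnodal]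
  linear_combination key

theorem sum_nodalWeight_mul_eval_div_sub_mul_sub (hvs : Set.InjOn v s) (hp : p.natDegree ≤ #s)
    {a b : F} (hab : a ≠ b) (ha : ∀ i ∈ s, a ≠ v i) (hb : ∀ i ∈ s, b ≠ v i) :
    ∑ i ∈ s, nodalWeight s v i * p.eval (v i) / ((a - v i) * (b - v i))
      = (p.eval b / (nodal s v).eval b - p.eval a / (nodal s v).eval a) / (a - b) := by
  have hab' : a - b ≠ 0 := sub_ne_zero.mpr hab
  have hsplit : ∀ i ∈ s, nodalWeight s v i * p.eval (v i) / ((a - v i) * (b - v i))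
      = (nodalWeight s v i * (b - v i)⁻¹ * p.eval (v i)
          - nodalWeight s v i * (a - v i)⁻¹ * p.eval (v i)) / (a - b) := fun i hi => by
    have hai : a - v i ≠ 0 := sub_ne_zero.mpr (ha i hi)
    have hbi : b - v i ≠ 0 := sub_ne_zero.mpr (hb i hi)
    field_simp
    ring
  rw [sum_congr rfl hsplit, ← sum_div, sum_sub_distrib,
    eval_div_eval_nodal_eq_coeff_add_sum hvs hp ha, eval_div_eval_nodal_eq_coeff_add_sum hvs hp hb]
  ring

end Lagrange

theorem Polynomial.deriv_eval_div_eval_of_isRoot {𝕜 : Type*} [NontriviallyNormedField 𝕜]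
    {p q : 𝕜[X]} {x : 𝕜} (hp : p.IsRoot x) (hq : q.eval x ≠ 0) :
    deriv (fun w => p.eval w / q.eval w) x = p.derivative.eval x / q.eval x := by
  have h : HasDerivAt (fun w => p.eval w / q.eval w) _ x :=
    (p.hasDerivAt x).div (q.hasDerivAt x) hq
  rw [h.deriv, hp.eq_zero]
  field_simp
  ring

section PhiHalf

variable {ι κ : Type*} [Fintype ι] [Fintype κ] {z : ι → ℂ} {ζ : κ → ℂ}

theorem phiHalf_eq_eval_div_eval (I : Finset κ) :
    phiHalf z ζ I = fun w => (Lagrange.nodal I ζ).eval w / (Lagrange.nodal univ z).eval w := by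
  funext w
  simp only [phiHalf, Lagrange.eval_nodal]

theorem phiHalf_div_deriv_phiHalf [DecidableEq κ] {A : Finset κ} (B : Finset κ) {i : κ}
    (hi : i ∈ A) (hz : ∀ t, z t ≠ ζ i) :
    phiHalf z ζ B (ζ i) / deriv (phiHalf z ζ A) (ζ i)
      = Lagrange.nodalWeight A ζ i * (Lagrange.nodal B ζ).eval (ζ i) := by
  have hQ : (Lagrange.nodal univ z).eval (ζ i) ≠ 0 :=
    Lagrange.eval_nodal_not_at_node fun t _ => (hz t).symm
  rw [phiHalf_eq_eval_div_eval A, Polynomial.deriv_eval_div_eval_of_isRoot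
    (Lagrange.eval_nodal_at_node hi) hQ, Lagrange.nodalWeight_eq_eval_derivative_nodal hi,
    phiHalf_eq_eval_div_eval B]
  field_simp

theorem phiHalfR_mul_phiHalfR_mul_sum [DecidableEq ι] [DecidableEq κ] {A B : Finset κ}
    (hζ : Set.InjOn ζ A) (hz : ∀ t, ∀ i ∈ A, z t ≠ ζ i) (hBA : #B ≤ #A) {r s : ι}
    (hrs : z r ≠ z s) :
    phiHalfR z ζ A r (z r) * phiHalfR z ζ A s (z s) *
        ∑ i ∈ A, phiHalf z ζ B (ζ i) /
          (deriv (phiHalf z ζ A) (ζ i) * ((z r - ζ i) * (z s - ζ i)))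
      = (phiHalfR z ζ A r (z r) * phiHalfR z ζ B s (z s)
          - phiHalfR z ζ B r (z r) * phiHalfR z ζ A s (z s)) / (z r - z s) := by
  have hsummand : ∀ i ∈ A, phiHalf z ζ B (ζ i) /
        (deriv (phiHalf z ζ A) (ζ i) * ((z r - ζ i) * (z s - ζ i)))
      = Lagrange.nodalWeight A ζ i * (Lagrange.nodal B ζ).eval (ζ i)
          / ((z r - ζ i) * (z s - ζ i)) := fun i hi => by
    rw [← div_div, phiHalf_div_deriv_phiHalf B hi fun t => hz t i hi]
  have hdeg : (Lagrange.nodal B ζ).natDegree ≤ #A := Lagrange.natDegree_nodal.trans_le hBA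
  have hr : (Lagrange.nodal A ζ).eval (z r) ≠ 0 := Lagrange.eval_nodal_not_at_node (hz r)
  have hs : (Lagrange.nodal A ζ).eval (z s) ≠ 0 := Lagrange.eval_nodal_not_at_node (hz s)
  rw [sum_congr rfl hsummand, Lagrange.sum_nodalWeight_mul_eval_div_sub_mul_sub hζ hdeg hrs
    (hz r) (hz s)]
  simp only [phiHalfR, ← Lagrange.eval_nodal]
  field_simp

end PhiHalf

theorem rhoCoef_add_rhoCoef_of_ne {ι κ : Type*} [Fintype ι] [DecidableEq ι] [Fintype κ]
    (linf : ℂ) (z : ι → ℂ) (ζ : κ → ℂ) (Ip Im : Finset κ) {r s : ι} (hrs : r ≠ s) :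
    rhoCoef linf z ζ Ip Im r s + rhoCoef linf z ζ Ip Im s r
      = linf / 2 * (phiHalfR z ζ Ip r (z r) * phiHalfR z ζ Im s (z s)
          - phiHalfR z ζ Im r (z r) * phiHalfR z ζ Ip s (z s)) / (z r - z s) := by
  rw [rhoCoef, rhoCoef, if_neg hrs, if_neg hrs.symm, ← neg_sub (z r), div_neg]
  ring

theorem offdiagonal_coefficient_identity
    {N : ℕ}
    (z : Fin N → ℂ) (ζ : Fin (2 * N) → ℂ)
    (hdist : Function.Injective (Sum.elim z ζ : Fin N ⊕ Fin (2 * N) → ℂ))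
    (Ip Im : Finset (Fin (2 * N)))
    (hIp : Ip.card = N) (hIm : Im.card = N)
    (linf : ℂ)
    (r s : Fin N) (hrs : r ≠ s) :
    linf / 8 * phiHalfR z ζ Ip r (z r) * phiHalfR z ζ Ip s (z s) *
        ∑ i ∈ Ip, phiHalf z ζ Im (ζ i) /
          (deriv (phiHalf z ζ Ip) (ζ i) * ((z r - ζ i) * (z s - ζ i)))
      = (rhoCoef linf z ζ Ip Im r s + rhoCoef linf z ζ Ip Im s r) / 4 ∧
    -(linf / 8) * phiHalfR z ζ Im r (z r) * phiHalfR z ζ Im s (z s) *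
        ∑ i ∈ Im, phiHalf z ζ Ip (ζ i) /
          (deriv (phiHalf z ζ Im) (ζ i) * ((z r - ζ i) * (z s - ζ i)))
      = (rhoCoef linf z ζ Ip Im r s + rhoCoef linf z ζ Ip Im s r) / 4 := by
  obtain ⟨hz, hζ, hzζ⟩ := Sum.elim_injective.mp hdist
  have hplus := phiHalfR_mul_phiHalfR_mul_sum (A := Ip) (B := Im) hζ.injOn (fun t i _ => hzζ t i)
    (by omega) (hz.ne hrs)
  have hminus := phiHalfR_mul_phiHalfR_mul_sum (A := Im) (B := Ip) hζ.injOn (fun t i _ => hzζ t i)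
    (by omega) (hz.ne hrs)
  rw [rhoCoef_add_rhoCoef_of_ne linf z ζ Ip Im hrs]
  constructor
  · linear_combination linf / 8 * hplus
  · linear_combination -(linf / 8) * hminus
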